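/- Let g ≥ 2 be an integer and let q be a positive rational number such that either q ≥ 1/(4g^3), or q ≥ 1/(g(4i+2)(4(g-i)+2)) for some integer i with 1 ≤ i ≤ ⌊g/2⌋. Then q ≥ 1/(4g(g+1)^2) if g is even, and q ≥ 1/(4g^2(g+2)) if g is odd. -/
import Mathlib


theorem uniform_lower_bound (g : ℕ) (hg : 2 ≤ g) (q : ℚ) (hq : 0 < q)
    (h : (1 : ℚ) / (4 * g ^ 3) ≤ q ∨
      ∃ i : ℕ, 1 ≤ i ∧ i ≤ g / 2 ∧
        (1 : ℚ) / (g * (4 * i + 2) * (4 * (g - i : ℕ) + 2)) ≤ q) :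
    (Even g → (1 : ℚ) / (4 * g * (g + 1) ^ 2) ≤ q) ∧
    (Odd g → (1 : ℚ) / (4 * g ^ 2 * (g + 2)) ≤ q) := by
  have hg2 : (2 : ℚ) ≤ (g : ℚ) := by exact_mod_cast hg
  have hgpos : (0 : ℚ) < g := by linarith
  constructor
  · intro _
    rcases h with h | ⟨i, hi1, hi2, h⟩
    · refine le_trans (le_trans ?_ (le_refl _)) h
      apply one_div_le_one_div_of_le
      · positivity
      · nlinarith
    · refine le_trans ?_ h
      have hiq1 : (1 : ℚ) ≤ (i : ℚ) := by exact_mod_cast hi1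
      have hig : i ≤ g := le_trans hi2 (Nat.div_le_self _ _)
      have h2i : 2 * i ≤ g := by omega
      have h2iq : 2 * (i : ℚ) ≤ g := by exact_mod_cast h2i
      have hcast : ((g - i : ℕ) : ℚ) = (g : ℚ) - i := by
        push_cast [Nat.cast_sub hig]; ring
      rw [hcast]
      have hgi : (1:ℚ) ≤ (g:ℚ) - i := by linarith
      have hpos : (0:ℚ) < (g:ℚ) * (4*(i:ℚ)+2) * (4*((g:ℚ)-(i:ℚ))+2) :=
        mul_pos (mul_pos hgpos (by linarith)) (by linarith)
      apply one_div_le_one_div_of_le hpos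
      nlinarith [sq_nonneg ((g : ℚ) - 2 * i)]
  · intro hodd
    rcases h with h | ⟨i, hi1, hi2, h⟩
    · refine le_trans ?_ h
      apply one_div_le_one_div_of_le
      · positivity
      · nlinarith
    · refine le_trans ?_ h
      have hiq1 : (1 : ℚ) ≤ (i : ℚ) := by exact_mod_cast hi1
      have hig : i ≤ g := le_trans hi2 (Nat.div_le_self _ _)
      have h2i : 2 * i + 1 ≤ g := by
        rcases hodd with ⟨k, hk⟩
        omega
      have h2iq : 2 * (i : ℚ) + 1 ≤ g := by exact_mod_cast h2i
      have hcast : ((g - i : ℕ) : ℚ) = (g : ℚ) - i := by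
        push_cast [Nat.cast_sub hig]; ring
      rw [hcast]
      have hgi : (1:ℚ) ≤ (g:ℚ) - i := by linarith
      have hpos : (0:ℚ) < (g:ℚ) * (4*(i:ℚ)+2) * (4*((g:ℚ)-(i:ℚ))+2) :=
        mul_pos (mul_pos hgpos (by linarith)) (by linarith)
      apply one_div_le_one_div_of_le hpos
      nlinarith [mul_nonneg (mul_nonneg (by linarith : (0:ℚ) ≤ (g:ℚ) - 2*i - 1) (by linarith : (0:ℚ) ≤ (g:ℚ) - 2*i + 1)) hgpos.le]
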